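/- Let n ≥ 1 and set ρ_j := n + 3/2 − j for j = 1, …, n+1. Let τ_1 ≥ τ_2 ≥ … ≥ τ_{n+1} ≥ 0 be real numbers and let k_2, …, k_{n+1} be real numbers with |k_j| ≤ τ_{j−1} + 1 for j = 2, …, n+1. Then Σ_{j=1}^{n+1} (τ_j + ρ_j)² − Σ_{j=2}^{n+1} (k_j + ρ_j)² ≥ (τ_{n+1} + 1/2)² ≥ 1/4. -/

import Mathlib

/-!
Since `ρ_{j-1} = ρ_j + 1 ≥ 1`, the bound `|k_j| ≤ τ_{j-1} + 1` gives
`|k_j + ρ_j| ≤ τ_{j-1} + ρ_{j-1}`, so the `j`-th term of the `k`-sum is dominated by the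
`(j-1)`-th term of the `τ`-sum. What is left over is the last `τ`-term, `(τ_{n+1} + 1/2)²`.
-/

open Finset

theorem sq_add_le_sq_add_one_add {x t r : ℝ} (hr : 0 ≤ r) (hx : |x| ≤ t + 1) :
    (x + r) ^ 2 ≤ (t + (r + 1)) ^ 2 := by
  obtain ⟨hlo, hhi⟩ := abs_le.mp hx
  exact sq_le_sq' (by linarith) (by linarith)

theorem sum_sq_add_le_sum_sq_add_pred (n : ℕ) (τ k ρ : ℕ → ℝ) (hρ : ∀ i, ρ (i + 1) + 1 = ρ i)
    (hρ_nonneg : ∀ j ≤ n + 1, 0 ≤ ρ j) (hk : ∀ j, 2 ≤ j → j ≤ n + 1 → |k j| ≤ τ (j - 1) + 1) :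
    ∑ j ∈ Icc 2 (n + 1), (k j + ρ j) ^ 2 ≤ ∑ j ∈ Icc 1 n, (τ j + ρ j) ^ 2 := by
  rw [← map_add_right_Icc 1 n 1, sum_map]
  refine sum_le_sum fun i hi => ?_
  obtain ⟨hi1, hin⟩ := mem_Icc.mp hi
  have := sq_add_le_sq_add_one_add (hρ_nonneg (i + 1) (by omega)) (hk (i + 1) (by omega) (by omega))
  simpa [hρ i] using this

theorem stmt14_general (n : ℕ) (τ k : ℕ → ℝ)
    (hτpos : 0 ≤ τ (n+1))
    (hk : ∀ j, 2 ≤ j → j ≤ n+1 → |k j| ≤ τ (j-1) + 1) :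
    (τ (n+1) + 1/2) ^ 2 ≤
      (∑ j ∈ Finset.Icc 1 (n+1), (τ j + ((n:ℝ) + 3/2 - j)) ^ 2) -
        ∑ j ∈ Finset.Icc 2 (n+1), (k j + ((n:ℝ) + 3/2 - j)) ^ 2 ∧
    (1/4 : ℝ) ≤ (τ (n+1) + 1/2) ^ 2 := by
  have hpaired := sum_sq_add_le_sum_sq_add_pred n τ k (fun j => (n : ℝ) + 3/2 - j)
    (fun i => by push_cast; ring) (fun j hj => by
      have : (j : ℝ) ≤ n + 1 := by exact_mod_cast hj
      linarith) hk
  have hlast : (n : ℝ) + 3/2 - ((n + 1 : ℕ) : ℝ) = 1/2 := by push_cast; ring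
  rw [sum_Icc_succ_top (by omega), hlast]
  exact ⟨by linarith, by nlinarith⟩

/-- Arithmetic core of Lemma 7.1(1) for `G = Spin(2n+2,1)`, with `ρ_j = n+3/2-j`:
if `τ_1 ≥ … ≥ τ_{n+1} ≥ 0` and `|k_j| ≤ τ_{j-1}+1`, then
`Σ_{j=1}^{n+1}(τ_j+ρ_j)² - Σ_{j=2}^{n+1}(k_j+ρ_j)² ≥ (τ_{n+1}+1/2)² ≥ 1/4`. -/
theorem stmt14 (n : ℕ) (hn : 1 ≤ n) (τ k : ℕ → ℝ)
    (hτ : ∀ j, 1 ≤ j → j + 1 ≤ n + 1 → τ (j+1) ≤ τ j)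
    (hτpos : 0 ≤ τ (n+1))
    (hk : ∀ j, 2 ≤ j → j ≤ n+1 → |k j| ≤ τ (j-1) + 1) :
    (τ (n+1) + 1/2) ^ 2 ≤
      (∑ j ∈ Finset.Icc 1 (n+1), (τ j + ((n:ℝ) + 3/2 - j)) ^ 2) -
        ∑ j ∈ Finset.Icc 2 (n+1), (k j + ((n:ℝ) + 3/2 - j)) ^ 2 ∧
    (1/4 : ℝ) ≤ (τ (n+1) + 1/2) ^ 2 :=
  stmt14_general n τ k hτpos hk
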